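/- Let m ≥ 3 be an integer, ω a complex number with ω^m = 1, and 1 < p ≤ 2^{1/m}, q = pω. Then J_q equals the set of complex numbers of the form ∑_{j=1}^m (pω)^{m-j} α_j with real numbers 0 ≤ α_j ≤ 1/(p^m - 1) for all j. -/

import Mathlib

def IsExpansionC (q z : ℂ) (c : ℕ → ℕ) : Prop :=
  (∀ k, c k ≤ 1) ∧ HasSum (fun k : ℕ => (c (k + 1) : ℂ) / q ^ (k + 1)) z

def JC (q : ℂ) : Set ℂ := {z | ∃ c, IsExpansionC q z c}

/-!
Because `ω ^ m = 1`, `q ^ m = p ^ m` is real, and for `j < m`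
`x / q ^ (i * m + j + 1) = q ^ (m - 1 - j) * x / (p ^ m) ^ (i + 1)`. Splitting a digit series
along the residues of its index mod `m` therefore writes each point of `J_q` as
`∑ j, q ^ (m - 1 - j) * α j`, where each `α j` is a real `{0,1}`-series in base `p ^ m`.
Such series fill exactly `[0, 1 / (p ^ m - 1)]`: they lie there by the geometric bound, and every
point is reached by the greedy expansion, since the base `p ^ m` is at most `2`.
-/

open Finset Filter Topology

theorem hasSum_of_hasSum_residues {M : Type*} [AddCommMonoid M] [TopologicalSpace M]
    [ContinuousAdd M] {m : ℕ} [NeZero m] {f : ℕ → M} {a : Fin m → M}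
    (h : ∀ j : Fin m, HasSum (fun i => f (i * m + j)) (a j)) : HasSum f (∑ j, a j) := by
  classical
  set g : Fin m → ℕ → M := fun j n => if Fin.ofNat m n = j then f n else 0
  have hg : ∀ j, HasSum (g j) (a j) := by
    intro j
    have hinj : Function.Injective fun i => (Nat.divModEquiv m).symm (i, j) :=
      (Nat.divModEquiv m).symm.injective.comp fun i i' hi => congrArg Prod.fst hi
    refine (hinj.hasSum_iff fun n hn => if_neg fun hj => hn ⟨n / m, ?_⟩).1 ?_
    · rw [← hj]; exact (Nat.divModEquiv m).symm_apply_apply n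
    · convert h j using 2 with i
      exact if_pos (congrArg Prod.snd ((Nat.divModEquiv m).apply_symm_apply (i, j)))
  convert hasSum_sum fun j _ => hg j
  simp [g]

section DigitExpansion

variable {β : ℝ}

theorem hasSum_one_div_pow_succ (hβ : 1 < β) :
    HasSum (fun i : ℕ => 1 / β ^ (i + 1)) (1 / (β - 1)) := by
  have hval : (1 - β⁻¹)⁻¹ * β⁻¹ = 1 / (β - 1) := by
    have : β ≠ 0 := by positivity
    field_simp [sub_ne_zero.2 hβ.ne']
  have hterm : (fun i : ℕ => 1 / β ^ (i + 1)) = fun i => β⁻¹ ^ i * β⁻¹ := by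
    funext i; rw [← pow_succ, inv_pow, one_div]
  rw [hterm, ← hval]
  exact (hasSum_geometric_of_lt_one (by positivity) (inv_lt_one_of_one_lt₀ hβ)).mul_right β⁻¹

theorem summable_digit_div_pow (hβ : 1 < β) {d : ℕ → ℕ} (hd : ∀ i, d i ≤ 1) :
    Summable fun i => (d i : ℝ) / β ^ (i + 1) :=
  (hasSum_one_div_pow_succ hβ).summable.of_nonneg_of_le (fun i => by positivity)
    fun i => div_le_div_of_nonneg_right (by exact_mod_cast hd i) (by positivity)

theorem tsum_digit_div_pow_mem_Icc (hβ : 1 < β) {d : ℕ → ℕ} (hd : ∀ i, d i ≤ 1) :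
    ∑' i, (d i : ℝ) / β ^ (i + 1) ∈ Set.Icc 0 (1 / (β - 1)) :=
  ⟨tsum_nonneg fun i => by positivity,
    hasSum_le (fun i => div_le_div_of_nonneg_right (by exact_mod_cast hd i) (by positivity))
      (summable_digit_div_pow hβ hd).hasSum (hasSum_one_div_pow_succ hβ)⟩

variable (β) (α : ℝ)

noncomputable def greedyRem : ℕ → ℝ
  | 0 => α
  | n + 1 => β * greedyRem n - if 1 ≤ β * greedyRem n then 1 else 0

noncomputable def greedyDigit (n : ℕ) : ℕ := if 1 ≤ β * greedyRem β α n then 1 else 0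

theorem greedyDigit_le_one (n : ℕ) : greedyDigit β α n ≤ 1 := by
  unfold greedyDigit; split <;> simp

theorem greedyRem_succ (n : ℕ) :
    greedyRem β α (n + 1) = β * greedyRem β α n - greedyDigit β α n := by
  simp only [greedyRem, greedyDigit]; split <;> simp

variable {β α}

theorem greedyRem_mem_Icc (hβ1 : 1 < β) (hβ2 : β ≤ 2) (hα : α ∈ Set.Icc 0 (1 / (β - 1)))
    (n : ℕ) : greedyRem β α n ∈ Set.Icc 0 (1 / (β - 1)) := by
  induction n with
  | zero => exact hα
  | succ n ih =>
    obtain ⟨h0, h1⟩ := ih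
    have hβ : β * (1 / (β - 1)) = 1 / (β - 1) + 1 := by
      field_simp [sub_ne_zero.2 hβ1.ne']; ring
    -- `β ≤ 2` means `1 ≤ 1 / (β - 1)`: subtracting the digit never leaves the interval
    have hle1 : 1 ≤ 1 / (β - 1) := by rw [le_div_iff₀ (by linarith)]; linarith
    have hmul : β * greedyRem β α n ≤ β * (1 / (β - 1)) := by gcongr
    have hnn : 0 ≤ β * greedyRem β α n := by positivity
    simp only [greedyRem]
    split_ifs <;> constructor <;> linarith

theorem sum_greedyDigit_add_greedyRem (hβ : β ≠ 0) (n : ℕ) :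
    ∑ i ∈ range n, (greedyDigit β α i : ℝ) / β ^ (i + 1) + greedyRem β α n / β ^ n = α := by
  induction n with
  | zero => simp [greedyRem]
  | succ n ih =>
    rw [sum_range_succ, greedyRem_succ]
    convert ih using 1
    field_simp
    ring

theorem hasSum_greedyDigit (hβ1 : 1 < β) (hβ2 : β ≤ 2) (hα : α ∈ Set.Icc 0 (1 / (β - 1))) :
    HasSum (fun i => (greedyDigit β α i : ℝ) / β ^ (i + 1)) α := by
  have hβ0 : 0 < β := by linarith
  have hrem : Tendsto (fun n => greedyRem β α n / β ^ n) atTop (𝓝 0) := by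
    have hgeom := (tendsto_pow_atTop_nhds_zero_of_lt_one (by positivity)
      (inv_lt_one_of_one_lt₀ hβ1)).const_mul (1 / (β - 1))
    rw [mul_zero] at hgeom
    refine squeeze_zero (fun n => div_nonneg (greedyRem_mem_Icc hβ1 hβ2 hα n).1 (by positivity))
      (fun n => ?_) hgeom
    rw [inv_pow, ← div_eq_mul_inv]
    exact div_le_div_of_nonneg_right (greedyRem_mem_Icc hβ1 hβ2 hα n).2 (by positivity)
  rw [hasSum_iff_tendsto_nat_of_nonneg (fun i => by positivity)]
  have := tendsto_const_nhds (x := α) |>.sub hrem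
  rw [sub_zero] at this
  exact this.congr fun n => (eq_sub_of_add_eq (sum_greedyDigit_add_greedyRem hβ0.ne' n)).symm

end DigitExpansion

theorem div_pow_mul_add_succ {K : Type*} [Field K] {q : K} (hq : q ≠ 0) {m j : ℕ} (hj : j < m)
    (x : K) (i : ℕ) : x / q ^ (i * m + j + 1) = q ^ (m - 1 - j) * (x / (q ^ m) ^ (i + 1)) := by
  obtain ⟨k, rfl⟩ : ∃ k, m = j + 1 + k := ⟨m - (j + 1), by omega⟩
  rw [show j + 1 + k - 1 - j = k by omega]
  field_simp
  ring

theorem hasSum_div_pow_of_residues {m : ℕ} [NeZero m] {q : ℂ} {β : ℝ} (hq : q ≠ 0)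
    (hqm : q ^ m = β) {c : ℕ → ℕ} {α : Fin m → ℝ}
    (hα : ∀ j : Fin m, HasSum (fun i => (c (i * m + j + 1) : ℝ) / β ^ (i + 1)) (α j)) :
    HasSum (fun k => (c (k + 1) : ℂ) / q ^ (k + 1)) (∑ j : Fin m, q ^ (m - 1 - j) * α j) := by
  refine hasSum_of_hasSum_residues fun j => ?_
  simp_rw [div_pow_mul_add_succ hq j.isLt, hqm]
  refine HasSum.mul_left _ ?_
  exact_mod_cast Complex.hasSum_ofReal.2 (hα j)

theorem J_root_of_unity_base (m : ℕ) (hm : 3 ≤ m) (ω : ℂ) (hω : ω ^ m = 1)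
    (p : ℝ) (hp1 : 1 < p) (hp2 : p ≤ (2 : ℝ) ^ ((1 : ℝ) / m)) (q : ℂ)
    (hq : q = (p : ℂ) * ω) :
    JC q = {z : ℂ | ∃ α : Fin m → ℝ,
      (∀ j, α j ∈ Set.Icc (0 : ℝ) (1 / (p ^ m - 1))) ∧
      z = ∑ j : Fin m, q ^ (m - 1 - (j : ℕ)) * (α j : ℂ)} := by
  have : NeZero m := ⟨by omega⟩
  have hω0 : ω ≠ 0 := by rintro rfl; simp [NeZero.ne m] at hω
  have hq0 : q ≠ 0 := hq ▸ mul_ne_zero (by exact_mod_cast (by positivity : p ≠ 0)) hω0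
  have hqm : q ^ m = ((p ^ m : ℝ) : ℂ) := by rw [hq, mul_pow, hω, mul_one]; push_cast; rfl
  have hpm1 : 1 < p ^ m := one_lt_pow₀ hp1 (NeZero.ne m)
  have hpm2 : p ^ m ≤ 2 := by
    rw [one_div] at hp2
    exact_mod_cast (Real.le_rpow_inv_iff_of_pos (by positivity) (by norm_num)
      (by positivity)).1 hp2
  ext z
  constructor
  · rintro ⟨c, hc, hz⟩
    have hblock (j : Fin m) := (summable_digit_div_pow hpm1 fun i => hc (i * m + j + 1)).hasSum
    exact ⟨_, fun j => tsum_digit_div_pow_mem_Icc hpm1 fun i => hc _,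
      hz.unique (hasSum_div_pow_of_residues hq0 hqm hblock)⟩
  · rintro ⟨α, hα, rfl⟩
    let digit (n : ℕ) : ℕ :=
      greedyDigit (p ^ m) (α (Nat.divModEquiv m n).2) (Nat.divModEquiv m n).1
    have hdigit (j : Fin m) (i : ℕ) : digit (i * m + j) = greedyDigit (p ^ m) (α j) i := by
      have h := (Nat.divModEquiv m).apply_symm_apply (i, j)
      rw [Nat.divModEquiv_symm_apply] at h
      simp only [digit, h]
    refine ⟨fun k => digit (k - 1), fun k => greedyDigit_le_one _ _ _,
      hasSum_div_pow_of_residues (c := fun k => digit (k - 1)) hq0 hqm fun j => ?_⟩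
    simpa only [Nat.add_sub_cancel, hdigit] using hasSum_greedyDigit hpm1 hpm2 (hα j)
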